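/- Let G be a finite connected simple graph of order n ≥ 2 and size m. Then the matching number of the subdivision graph S(G) satisfies β(S(G)) = min{n, m}. -/

import Mathlib

/-- The subdivision graph `S(G)`: vertices are `V(G) ⊕ E(G)`, with `v ∈ V(G)` adjacent to
`e ∈ E(G)` iff `v` is an endpoint of `e`. -/
def subdivision {V : Type*} (G : SimpleGraph V) : SimpleGraph (V ⊕ G.edgeSet) where
  Adj a b :=
    match a, b with
    | Sum.inl v, Sum.inr e => v ∈ (e : Sym2 V)
    | Sum.inr e, Sum.inl v => v ∈ (e : Sym2 V)
    | _, _ => False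
  symm := by constructor; rintro (v | e) (w | f) h <;> simp_all
  loopless := by constructor; rintro (v | e) h <;> simp_all


/-! A matching of `S(G)` is the same thing as a set of vertices of `G`, each paired with an
incident edge, with distinct vertices getting distinct edges; this bounds it by both `n` and `m`.
For the matching itself, fix a root `r` and pair each `v ≠ r` with the edge to a neighbour strictly
closer to `r`: two vertices cannot share that edge, which gives `n - 1` pairs. If `m ≥ n`, a
spanning tree `T` misses some edge `ab`; doing the above in `T` rooted at `a` and pairing `a` with
`ab` gives `n` pairs. -/

open Function

namespace SimpleGraph

variable {V : Type*} {G : SimpleGraph V}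

lemma Connected.exists_adj_dist_lt (hG : G.Connected) {v r : V} (hv : v ≠ r) :
    ∃ w, G.Adj v w ∧ G.dist w r < G.dist v r := by
  obtain ⟨p, hp⟩ := hG.exists_walk_length_eq_dist v r
  obtain ⟨w, hadj, q, rfl⟩ := p.exists_eq_cons_of_ne hv
  refine ⟨w, hadj, ?_⟩
  calc G.dist w r ≤ q.length := dist_le q
    _ < (Walk.cons hadj q).length := by simp
    _ = G.dist v r := hp

lemma Connected.exists_injective_mem_edge_compl_singleton (hG : G.Connected) (r : V) :
    ∃ g : ({r}ᶜ : Set V) → G.edgeSet, Injective g ∧ ∀ v, (v : V) ∈ (g v : Sym2 V) := by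
  choose parent hadj hdist using fun v : ({r}ᶜ : Set V) ↦ hG.exists_adj_dist_lt v.2
  refine ⟨fun v ↦ ⟨s(v, parent v), hadj v⟩, fun u v huv ↦ ?_, fun v ↦ Sym2.mem_mk_left _ _⟩
  rcases Sym2.eq_iff.mp (congrArg Subtype.val huv) with ⟨h, -⟩ | ⟨hu, hv⟩
  · exact Subtype.ext h
  · -- `u` and `v` would each be strictly closer to `r` than the other
    have hu' := hdist u
    have hv' := hdist v
    rw [hv] at hu'
    rw [← hu] at hv'
    omega

lemma Connected.exists_injective_mem_edge_of_le {T : SimpleGraph V} (hT : T.Connected)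
    (hTG : T ≤ G) {a b : V} (hab : G.Adj a b) (hab_T : ¬T.Adj a b) :
    ∃ g : V → G.edgeSet, Injective g ∧ ∀ v, v ∈ (g v : Sym2 V) := by
  classical
  obtain ⟨g, hg, hmem⟩ := hT.exists_injective_mem_edge_compl_singleton a
  let g' : ({a}ᶜ : Set V) → G.edgeSet := Set.inclusion (edgeSet_mono hTG) ∘ g
  refine ⟨fun v ↦ if h : v = a then ⟨s(a, b), hab⟩ else g' ⟨v, h⟩, ?_, fun v ↦ ?_⟩
  · refine Injective.dite (· = a) (f := fun _ ↦ ⟨s(a, b), hab⟩) (f' := g')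
      (injective_of_subsingleton _) ((Set.inclusion_injective _).comp hg) fun h ↦ hab_T ?_
    have hg' : s(a, b) = g _ := congrArg Subtype.val h
    rw [← mem_edgeSet, hg']
    exact (g _).2
  · by_cases h : v = a
    · simp [h]
    · simpa [h, g'] using hmem ⟨v, h⟩

lemma Connected.exists_injective_mem_edge [Finite V] (hG : G.Connected)
    (h : Nat.card V ≤ G.edgeSet.ncard) :
    ∃ g : V → G.edgeSet, Injective g ∧ ∀ v, v ∈ (g v : Sym2 V) := by
  obtain ⟨T, hTG, hT⟩ := hG.exists_isTree_le
  have hcard : T.edgeSet.ncard + 1 = Nat.card V := by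
    rw [← Nat.card_coe_set_eq]; exact (isTree_iff_connected_and_card.mp hT).2
  obtain ⟨e, he, heT⟩ := Set.exists_mem_notMem_of_ncard_lt_ncard (s := T.edgeSet)
    (t := G.edgeSet) (by omega)
  induction e using Sym2.ind with
  | h a b => exact hT.connected.exists_injective_mem_edge_of_le hTG he heT

end SimpleGraph

section Matching

variable {W : Type*}

def matchingCards (H : SimpleGraph W) : Set ℕ :=
  {k | ∃ M : Set (Sym2 W), M ⊆ H.edgeSet ∧
    (∀ e ∈ M, ∀ f ∈ M, e ≠ f → ∀ x, ¬ (x ∈ e ∧ x ∈ f)) ∧ M.ncard = k}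

lemma mem_matchingCards_of_le {H : SimpleGraph W} {j k : ℕ} (hk : k ∈ matchingCards H)
    (hjk : j ≤ k) : j ∈ matchingCards H := by
  obtain ⟨M, hMH, hM, rfl⟩ := hk
  obtain ⟨N, hNM, rfl⟩ := Set.exists_subset_card_eq hjk
  exact ⟨N, hNM.trans hMH, fun e he f hf ↦ hM e (hNM he) f (hNM hf), rfl⟩

lemma ncard_le_of_forall_exists_mem {M : Set (Sym2 W)}
    (hM : ∀ e ∈ M, ∀ f ∈ M, e ≠ f → ∀ x, ¬ (x ∈ e ∧ x ∈ f)) {s : Set W} (hs : s.Finite)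
    (h : ∀ e ∈ M, ∃ x ∈ s, x ∈ e) : M.ncard ≤ s.ncard := by
  obtain rfl | ⟨e₀, he₀⟩ := M.eq_empty_or_nonempty
  · simp
  have : Nonempty W := ⟨(h e₀ he₀).choose⟩
  choose! φ hφs hφe using h
  refine Set.ncard_le_ncard_of_injOn φ hφs (fun e he f hf hef ↦ ?_) hs
  by_contra hne
  exact hM e he f hf hne (φ e) ⟨hφe e he, hef ▸ hφe f hf⟩

end Matching

section Subdivision

variable {V : Type*} {G : SimpleGraph V}

lemma exists_eq_of_mem_edgeSet_subdivision {e : Sym2 (V ⊕ G.edgeSet)}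
    (he : e ∈ (subdivision G).edgeSet) : ∃ v ε, e = s(Sum.inl v, Sum.inr ε) := by
  induction e using Sym2.ind with
  | h x y =>
    rcases x with v | ε <;> rcases y with w | δ
    · exact he.elim
    · exact ⟨v, δ, rfl⟩
    · exact ⟨w, ε, Sym2.eq_swap⟩
    · exact he.elim

lemma le_of_mem_matchingCards_subdivision [Finite V] {k : ℕ}
    (hk : k ∈ matchingCards (subdivision G)) : k ≤ Nat.card V ∧ k ≤ G.edgeSet.ncard := by
  obtain ⟨M, hMH, hM, rfl⟩ := hk
  have hform : ∀ e ∈ M, ∃ v ε, e = s(Sum.inl v, Sum.inr ε) :=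
    fun _ he ↦ exists_eq_of_mem_edgeSet_subdivision (hMH he)
  constructor
  · calc M.ncard ≤ (Set.range (Sum.inl : V → V ⊕ G.edgeSet)).ncard :=
          ncard_le_of_forall_exists_mem hM (Set.finite_range _) fun e he ↦ by
            obtain ⟨v, ε, rfl⟩ := hform e he
            exact ⟨_, Set.mem_range_self v, Sym2.mem_mk_left _ _⟩
      _ = Nat.card V := Set.ncard_range_of_injective Sum.inl_injective
  · calc M.ncard ≤ (Set.range (Sum.inr : G.edgeSet → V ⊕ G.edgeSet)).ncard :=
          ncard_le_of_forall_exists_mem hM (Set.finite_range _) fun e he ↦ by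
            obtain ⟨v, ε, rfl⟩ := hform e he
            exact ⟨_, Set.mem_range_self ε, Sym2.mem_mk_right _ _⟩
      _ = G.edgeSet.ncard := by
          rw [Set.ncard_range_of_injective Sum.inr_injective, Nat.card_coe_set_eq]

lemma natCard_mem_matchingCards_subdivision {α : Type*} {u : α → V} {g : α → G.edgeSet}
    (hu : Injective u) (hg : Injective g) (hmem : ∀ x, u x ∈ (g x : Sym2 V)) :
    Nat.card α ∈ matchingCards (subdivision G) := by
  have hdisj : ∀ x y, x ≠ y → ∀ z, ¬ (z ∈ s(Sum.inl (u x), Sum.inr (g x)) ∧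
      z ∈ s(Sum.inl (u y), Sum.inr (g y))) := by
    rintro x y hxy z ⟨hzx, hzy⟩
    rcases z with w | δ <;> simp only [Sym2.mem_iff, Sum.inl.injEq, Sum.inr.injEq, reduceCtorEq,
      or_false, false_or] at hzx hzy
    · exact hxy (hu (hzx.symm.trans hzy))
    · exact hxy (hg (hzx.symm.trans hzy))
  refine ⟨Set.range fun x ↦ s(Sum.inl (u x), Sum.inr (g x)), ?_, ?_,
    Set.ncard_range_of_injective fun x y hxy ↦ ?_⟩
  · rintro _ ⟨x, rfl⟩
    exact hmem x
  · rintro _ ⟨x, rfl⟩ _ ⟨y, rfl⟩ hne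
    exact hdisj x y fun h ↦ hne (h ▸ rfl)
  · by_contra hne
    exact hdisj x y hne _ ⟨Sym2.mem_mk_left _ _, hxy ▸ Sym2.mem_mk_left _ _⟩

end Subdivision

theorem matchingNum_subdivision_general {V : Type*} [Fintype V] (G : SimpleGraph V)
    (hconn : G.Connected) :
    IsGreatest {k : ℕ | ∃ M : Set (Sym2 (V ⊕ G.edgeSet)),
        M ⊆ (subdivision G).edgeSet ∧
        (∀ e ∈ M, ∀ f ∈ M, e ≠ f → ∀ x, ¬ (x ∈ e ∧ x ∈ f)) ∧
        M.ncard = k}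
      (min (Fintype.card V) G.edgeSet.ncard) := by
  change IsGreatest (matchingCards (subdivision G)) _
  rw [← Nat.card_eq_fintype_card]
  refine ⟨?_, fun k hk ↦ le_min_iff.mpr (le_of_mem_matchingCards_subdivision hk)⟩
  rcases le_or_gt (Nat.card V) G.edgeSet.ncard with hVE | hEV
  · obtain ⟨g, hg, hmem⟩ := hconn.exists_injective_mem_edge hVE
    rw [min_eq_left hVE]
    exact natCard_mem_matchingCards_subdivision injective_id hg hmem
  · obtain ⟨r⟩ := hconn.nonempty
    obtain ⟨g, hg, hmem⟩ := hconn.exists_injective_mem_edge_compl_singleton r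
    have hr := natCard_mem_matchingCards_subdivision Subtype.val_injective hg hmem
    rw [Nat.card_coe_set_eq, Set.ncard_compl, Set.ncard_singleton] at hr
    rw [min_eq_right hEV.le]
    exact mem_matchingCards_of_le hr (by omega)

/-- For a finite connected simple graph `G` of order `n ≥ 2` and size `m`,
`β(S(G)) = min {n, m}`, i.e. `min {n, m}` is the greatest cardinality of a matching
(a set of pairwise non-incident edges) of `S(G)`. -/
theorem matchingNum_subdivision {V : Type*} [Fintype V] (G : SimpleGraph V)
    (hconn : G.Connected) (hn : 2 ≤ Fintype.card V) :
    IsGreatest {k : ℕ | ∃ M : Set (Sym2 (V ⊕ G.edgeSet)),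
        M ⊆ (subdivision G).edgeSet ∧
        (∀ e ∈ M, ∀ f ∈ M, e ≠ f → ∀ x, ¬ (x ∈ e ∧ x ∈ f)) ∧
        M.ncard = k}
      (min (Fintype.card V) G.edgeSet.ncard) :=
  matchingNum_subdivision_general G hconn
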